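/- Let G(t; r, ρ, ζ) = (4√π t^{3/2})⁻¹ exp(-(r² + ρ² + ζ²)/(4t)) I₁(rρ/(2t)). Then for each r > 0 and t > 0, (∫_{-∞}^∞ ∫_0^∞ |G(t; r, ρ, ζ)|² ρ dρ dζ)^{1/2} ≤ C t^{-3/4} exp(-r²/(8t)) √(I₁(r²/(4t))) for some absolute constant C. -/

import Mathlib

open Real MeasureTheory

/-- The modified Bessel function of the first kind of order 1,
`I₁(x) = ∑_{m=0}^∞ (1/(m!(m+1)!)) (x/2)^{2m+1}`. -/
noncomputable def besselI1 (x : ℝ) : ℝ :=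
  ∑' m : ℕ, (1 / (Nat.factorial m * Nat.factorial (m + 1)) : ℝ) * (x / 2) ^ (2 * m + 1)

/-- The heat kernel of `∂_t - (Δ - 1/r²)` in the axially symmetric setting. -/
noncomputable def G (t r ρ ζ : ℝ) : ℝ :=
  (4 * Real.sqrt π * t ^ ((3 : ℝ) / 2))⁻¹ *
    Real.exp (-(r ^ 2 + ρ ^ 2 + ζ ^ 2) / (4 * t)) * besselI1 (r * ρ / (2 * t))

/-!
Squaring `G` separates the variables: the `ζ`-integral is Gaussian, and after the
substitution `ρ = √(2t) s` the `ρ`-integral becomes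
`∫₀^∞ e^{-s²} I₁(as)² s ds = e^{a²/2} I₁(a²/2) / 2`.
This identity is proved on power series. Integrating the Cauchy square of the series of `I₁`
termwise with `∫₀^∞ e^{-s²} s^{2n+1} ds = n!/2` (Vandermonde gives the coefficients of `I₁²`),
and multiplying the series of `eʸ` and `I₁(y)` (expanding `(1 + X)^{2n} = (2X + (1 + X²))ⁿ`
gives the coefficients), both sides become `∑ₙ C(2n, n+1) (a²/4)ⁿ / n!`. The bound therefore holds
with equality, for `C = (√(2π) / (16π))^{1/2}`.
-/

open Finset Polynomial
open scoped Nat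

noncomputable def besselI1Coeff (m : ℕ) : ℝ := 1 / ((m ! : ℝ) * ((m + 1)! : ℝ))

lemma besselI1Coeff_pos (m : ℕ) : 0 < besselI1Coeff m := by
  unfold besselI1Coeff
  positivity

lemma besselI1_eq_tsum (x : ℝ) :
    besselI1 x = ∑' m, besselI1Coeff m * (x / 2) ^ (2 * m + 1) := rfl

lemma summable_norm_besselI1Coeff_mul_pow (x : ℝ) :
    Summable fun m => ‖besselI1Coeff m * (x / 2) ^ (2 * m + 1)‖ := by
  refine .of_nonneg_of_le (fun m => norm_nonneg _) (fun m => ?_)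
    ((Real.summable_pow_div_factorial ((x / 2) ^ 2)).mul_left |x / 2|)
  have hcoeff : besselI1Coeff m ≤ 1 / (m ! : ℝ) :=
    one_div_le_one_div_of_le (by positivity)
      (le_mul_of_one_le_right (by positivity) (by exact_mod_cast (m + 1).factorial_pos))
  calc ‖besselI1Coeff m * (x / 2) ^ (2 * m + 1)‖
      = besselI1Coeff m * (((x / 2) ^ 2) ^ m * |x / 2|) := by
        rw [norm_mul, Real.norm_of_nonneg (besselI1Coeff_pos m).le, norm_pow, Real.norm_eq_abs,
          pow_succ, pow_mul, sq_abs]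
    _ ≤ 1 / (m ! : ℝ) * (((x / 2) ^ 2) ^ m * |x / 2|) := by gcongr
    _ = |x / 2| * (((x / 2) ^ 2) ^ m / m !) := by ring

lemma besselI1_nonneg {x : ℝ} (hx : 0 ≤ x) : 0 ≤ besselI1 x :=
  tsum_nonneg fun m => by have := besselI1Coeff_pos m; positivity

noncomputable def besselI1PowCoeff (i : ℕ) : ℝ :=
  if 2 ∣ i + 1 then besselI1Coeff (i / 2) / 2 ^ i else 0

lemma besselI1PowCoeff_mul_pow_odd (y : ℝ) (m : ℕ) :
    besselI1PowCoeff (2 * m + 1) * y ^ (2 * m + 1) = besselI1Coeff m * (y / 2) ^ (2 * m + 1) := by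
  rw [besselI1PowCoeff, if_pos ⟨m + 1, by ring⟩, show (2 * m + 1) / 2 = m by omega, div_pow]
  ring

lemma support_besselI1PowCoeff_subset :
    Function.support besselI1PowCoeff ⊆ Set.range fun m => 2 * m + 1 := fun i hi => by
  by_contra hodd
  exact hi (if_neg fun ⟨m, hm⟩ => hodd ⟨m - 1, by simp only; omega⟩)

lemma two_mul_add_one_injective : Function.Injective fun m : ℕ => 2 * m + 1 := fun m n h => by
  simp only at h; omega

lemma besselI1_eq_tsum_pow (y : ℝ) : besselI1 y = ∑' i, besselI1PowCoeff i * y ^ i := by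
  rw [← two_mul_add_one_injective.tsum_eq
    ((Function.support_mul_subset_left _ _).trans support_besselI1PowCoeff_subset)]
  exact tsum_congr fun m => (besselI1PowCoeff_mul_pow_odd y m).symm

lemma summable_norm_besselI1PowCoeff_mul_pow (y : ℝ) :
    Summable fun i => ‖besselI1PowCoeff i * y ^ i‖ := by
  rw [← two_mul_add_one_injective.summable_iff fun i hi => by
    rw [Function.notMem_support.1 fun h => hi (support_besselI1PowCoeff_subset h), zero_mul,
      norm_zero]]
  simpa only [Function.comp_def, besselI1PowCoeff_mul_pow_odd] using
    summable_norm_besselI1Coeff_mul_pow y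

lemma choose_two_mul_succ_eq_sum_antidiagonal (n : ℕ) :
    (2 * n).choose (n + 1) = ∑ p ∈ antidiagonal n,
      if 2 ∣ p.2 + 1 then n.choose p.1 * 2 ^ p.1 * p.2.choose ((p.2 + 1) / 2) else 0 := by
  have hsq : (X + 1 : ℕ[X]) ^ 2 = C 2 * X + expand ℕ 2 (X + 1) := by
    simp only [map_add, expand_X, map_one, map_ofNat]
    ring
  have hcoeff := coeff_X_add_one_pow ℕ (2 * n) (n + 1)
  rw [Nat.cast_id] at hcoeff
  rw [← hcoeff, pow_mul, hsq, (Commute.all _ _).add_pow', finsetSum_coeff]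
  refine sum_congr rfl fun p hp => ?_
  rw [HasAntidiagonal.mem_antidiagonal] at hp
  rw [nsmul_eq_mul, mul_pow, ← map_pow, ← map_pow, ← C_eq_natCast, mul_assoc, coeff_C_mul,
    mul_assoc, coeff_C_mul, coeff_X_pow_mul', if_pos (by omega), coeff_expand two_pos,
    coeff_X_add_one_pow, show n + 1 - p.1 = p.2 + 1 by omega]
  split_ifs <;> simp

lemma sum_antidiagonal_besselI1PowCoeff_div_factorial (n : ℕ) :
    ∑ p ∈ antidiagonal n, besselI1PowCoeff p.2 / p.1 !
      = (2 * n).choose (n + 1) / (n ! * 2 ^ n) := by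
  rw [choose_two_mul_succ_eq_sum_antidiagonal, Nat.cast_sum, sum_div]
  refine sum_congr rfl fun p hp => ?_
  rw [HasAntidiagonal.mem_antidiagonal] at hp
  obtain ⟨j, i⟩ := p
  simp only [besselI1PowCoeff] at hp ⊢
  split_ifs with hodd
  · obtain ⟨m, rfl⟩ : ∃ m, i = 2 * m + 1 := ⟨i / 2, by omega⟩
    rw [show (2 * m + 1 + 1) / 2 = m + 1 by omega, show (2 * m + 1) / 2 = m by omega,
      Nat.cast_mul, Nat.cast_mul, Nat.cast_choose ℝ (by omega : j ≤ n),
      Nat.cast_choose ℝ (by omega : m + 1 ≤ 2 * m + 1), show n - j = 2 * m + 1 by omega,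
      show 2 * m + 1 - (m + 1) = m by omega, ← hp, pow_add, besselI1Coeff]
    field_simp
    push_cast
    ring
  · simp

lemma exp_mul_besselI1_eq_tsum (y : ℝ) :
    exp y * besselI1 y = ∑' n, (2 * n).choose (n + 1) / n ! * (y / 2) ^ n := by
  have hexp : exp y = ∑' j, y ^ j / j ! := by
    rw [Real.exp_eq_exp_ℝ, NormedSpace.exp_eq_tsum_div]
  have hsummable : Summable fun j => ‖y ^ j / (j ! : ℝ)‖ := by
    simpa only [norm_div, norm_pow, Real.norm_natCast] using Real.summable_pow_div_factorial ‖y‖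
  rw [hexp, besselI1_eq_tsum_pow, tsum_mul_tsum_eq_tsum_sum_antidiagonal_of_summable_norm
    hsummable (summable_norm_besselI1PowCoeff_mul_pow y)]
  refine tsum_congr fun n => ?_
  calc ∑ p ∈ antidiagonal n, y ^ p.1 / p.1 ! * (besselI1PowCoeff p.2 * y ^ p.2)
      = (∑ p ∈ antidiagonal n, besselI1PowCoeff p.2 / p.1 !) * y ^ n := by
        rw [sum_mul]
        refine sum_congr rfl fun p hp => ?_
        rw [← HasAntidiagonal.mem_antidiagonal.1 hp, pow_add]
        ring
    _ = _ := by
        rw [sum_antidiagonal_besselI1PowCoeff_div_factorial, div_pow]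
        ring

lemma sum_antidiagonal_besselI1Coeff_mul (k : ℕ) :
    ∑ p ∈ antidiagonal k, besselI1Coeff p.1 * besselI1Coeff p.2
      = (2 * k + 2).choose k / ((k + 1)! : ℝ) ^ 2 := by
  rw [show 2 * k + 2 = (k + 1) + (k + 1) by ring, Nat.add_choose_eq, Nat.cast_sum, sum_div]
  refine sum_congr rfl fun p hp => ?_
  rw [HasAntidiagonal.mem_antidiagonal] at hp
  obtain ⟨i, j⟩ := p
  simp only at hp ⊢
  rw [Nat.cast_mul, Nat.cast_choose ℝ (by omega : i ≤ k + 1),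
    Nat.cast_choose ℝ (by omega : j ≤ k + 1), show k + 1 - i = j + 1 by omega,
    show k + 1 - j = i + 1 by omega, besselI1Coeff, besselI1Coeff]
  field_simp

lemma besselI1_sq_eq_tsum (x : ℝ) :
    besselI1 x ^ 2
      = ∑' k, (2 * k + 2).choose k / ((k + 1)! : ℝ) ^ 2 * (x / 2) ^ (2 * k + 2) := by
  rw [sq, besselI1_eq_tsum, tsum_mul_tsum_eq_tsum_sum_antidiagonal_of_summable_norm
    (summable_norm_besselI1Coeff_mul_pow x) (summable_norm_besselI1Coeff_mul_pow x)]
  refine tsum_congr fun k => ?_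
  rw [← sum_antidiagonal_besselI1Coeff_mul, sum_mul]
  refine sum_congr rfl fun p hp => ?_
  rw [← HasAntidiagonal.mem_antidiagonal.1 hp,
    show 2 * (p.1 + p.2) + 2 = (2 * p.1 + 1) + (2 * p.2 + 1) by ring, pow_add]
  ring

lemma rpow_natCast_mul_exp_neg_rpow_two (n : ℕ) (s : ℝ) :
    s ^ (n : ℝ) * exp (-s ^ (2 : ℝ)) = exp (-s ^ 2) * s ^ n := by
  rw [Real.rpow_natCast, Real.rpow_two, mul_comm]

lemma integrableOn_exp_neg_sq_mul_pow (n : ℕ) :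
    IntegrableOn (fun s : ℝ => exp (-s ^ 2) * s ^ n) (Set.Ioi 0) :=
  (integrableOn_rpow_mul_exp_neg_rpow (by linarith [n.cast_nonneg (α := ℝ)]) two_pos).congr_fun
    (fun s _ => rpow_natCast_mul_exp_neg_rpow_two n s) measurableSet_Ioi

lemma integral_exp_neg_sq_mul_pow_odd (n : ℕ) :
    ∫ s in Set.Ioi (0 : ℝ), exp (-s ^ 2) * s ^ (2 * n + 1) = n ! / 2 := by
  have h := integral_rpow_mul_exp_neg_rpow (p := 2) (q := (2 * n + 1 : ℕ)) two_pos
    (by linarith [(2 * n + 1 : ℕ).cast_nonneg (α := ℝ)])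
  rw [show (((2 * n + 1 : ℕ) : ℝ) + 1) / 2 = n + 1 by push_cast; ring,
    Real.Gamma_nat_eq_factorial] at h
  simp_rw [rpow_natCast_mul_exp_neg_rpow_two] at h
  rw [h]
  ring

lemma summable_choose_div_factorial_mul_pow (y : ℝ) :
    Summable fun n => (2 * n).choose (n + 1) / (n ! : ℝ) * (y / 2) ^ n := by
  refine .of_norm_bounded (Real.summable_pow_div_factorial (2 * |y|)) fun n => ?_
  have hchoose : ((2 * n).choose (n + 1) : ℝ) ≤ 4 ^ n := by
    rw [show (4 : ℝ) ^ n = ((2 ^ (2 * n) : ℕ) : ℝ) by push_cast; rw [pow_mul]; norm_num]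
    exact_mod_cast Nat.choose_le_two_pow _ _
  rw [norm_mul, norm_div, norm_pow, Real.norm_natCast, Real.norm_natCast, Real.norm_eq_abs,
    abs_div, abs_two, div_mul_eq_mul_div, mul_comm]
  calc (|y| / 2) ^ n * (2 * n).choose (n + 1) / n ! ≤ (|y| / 2) ^ n * 4 ^ n / n ! := by gcongr
    _ = (2 * |y|) ^ n / n ! := by rw [← mul_pow]; ring_nf

lemma integral_exp_neg_sq_mul_besselI1_sq (a : ℝ) :
    ∫ s in Set.Ioi (0 : ℝ), exp (-s ^ 2) * besselI1 (a * s) ^ 2 * s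
      = exp (a ^ 2 / 2) * besselI1 (a ^ 2 / 2) / 2 := by
  set u : ℕ → ℝ := fun k =>
    (2 * k + 2).choose k / ((k + 1)! : ℝ) ^ 2 * (a / 2) ^ (2 * k + 2)
  set F : ℕ → ℝ → ℝ := fun k s => u k * (exp (-s ^ 2) * s ^ (2 * (k + 1) + 1))
  have hu_nonneg (k : ℕ) : 0 ≤ u k := by
    have : 0 ≤ (a / 2) ^ (2 * k + 2) := Even.pow_nonneg ⟨k + 1, by ring⟩ _
    positivity
  have hF_integral (k : ℕ) : ∫ s in Set.Ioi 0, F k s = u k * ((k + 1)! / 2) := by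
    rw [integral_const_mul, integral_exp_neg_sq_mul_pow_odd]
  have hF_norm_integral (k : ℕ) : ∫ s in Set.Ioi 0, ‖F k s‖ = u k * ((k + 1)! / 2) := by
    rw [← hF_integral]
    refine setIntegral_congr_fun measurableSet_Ioi fun s (hs : 0 < s) => ?_
    exact Real.norm_of_nonneg (by have := hu_nonneg k; positivity)
  have hterm (k : ℕ) : u k * ((k + 1)! / 2)
      = (2 * (k + 1)).choose (k + 1 + 1) / ((k + 1)! : ℝ) * (a ^ 2 / 2 / 2) ^ (k + 1) / 2 := by
    simp only [u]
    rw [Nat.choose_symm_of_eq_add (by ring : 2 * k + 2 = k + (k + 2)),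
      show a ^ 2 / 2 / 2 = (a / 2) ^ 2 by ring, ← pow_mul, show 2 * (k + 1) = 2 * k + 2 by ring]
    field_simp
  have hshift := (summable_nat_add_iff 1).2 (summable_choose_div_factorial_mul_pow (a ^ 2 / 2))
  calc ∫ s in Set.Ioi 0, exp (-s ^ 2) * besselI1 (a * s) ^ 2 * s
      = ∫ s in Set.Ioi 0, ∑' k, F k s := by
        congr 1 with s
        rw [besselI1_sq_eq_tsum, ← tsum_mul_left, ← tsum_mul_right]
        refine tsum_congr fun k => ?_
        simp only [F, u, pow_succ]
        ring
    _ = ∑' k, u k * ((k + 1)! / 2) := by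
        rw [← integral_tsum_of_summable_integral_norm
          (fun k => (integrableOn_exp_neg_sq_mul_pow _).const_mul (u k))
          ((summable_congr hF_norm_integral).2 (by simpa only [hterm] using hshift.div_const 2))]
        exact tsum_congr hF_integral
    _ = exp (a ^ 2 / 2) * besselI1 (a ^ 2 / 2) / 2 := by
        rw [exp_mul_besselI1_eq_tsum,
          (summable_choose_div_factorial_mul_pow (a ^ 2 / 2)).tsum_eq_zero_add]
        simp only [mul_zero, Nat.choose_zero_succ, Nat.cast_zero, zero_div, zero_mul, zero_add,
          ← tsum_div_const]
        exact tsum_congr hterm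

lemma integral_exp_mul_besselI1_sq {t : ℝ} (ht : 0 < t) (r : ℝ) :
    ∫ ρ in Set.Ioi (0 : ℝ), exp (-ρ ^ 2 / (2 * t)) * besselI1 (r * ρ / (2 * t)) ^ 2 * ρ
      = t * (exp (r ^ 2 / (4 * t)) * besselI1 (r ^ 2 / (4 * t))) := by
  set b := √(2 * t)
  have hb : 0 < b := Real.sqrt_pos.2 (by positivity)
  have hb2 : b ^ 2 = 2 * t := Real.sq_sqrt (by positivity)
  have hsubst := integral_comp_mul_left_Ioi
    (fun ρ => exp (-ρ ^ 2 / (2 * t)) * besselI1 (r * ρ / (2 * t)) ^ 2 * ρ) 0 hb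
  have hscaled (s : ℝ) :
      exp (-(b * s) ^ 2 / (2 * t)) * besselI1 (r * (b * s) / (2 * t)) ^ 2 * (b * s)
      = b * (exp (-s ^ 2) * besselI1 (r / b * s) ^ 2 * s) := by
    rw [mul_pow, hb2, show r * (b * s) / (2 * t) = r / b * s by rw [← hb2]; field_simp]
    field_simp
  simp only [hscaled, mul_zero, integral_const_mul, integral_exp_neg_sq_mul_besselI1_sq,
    smul_eq_mul] at hsubst
  have hy : (r / b) ^ 2 / 2 = r ^ 2 / (4 * t) := by
    rw [div_pow, hb2]
    field_simp
    ring
  rw [hy, eq_inv_mul_iff_mul_eq₀ hb.ne'] at hsubst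
  rw [← hsubst, ← mul_assoc, ← sq, hb2]
  ring

lemma sq_abs_G_mul {t : ℝ} (ht : 0 < t) (r ρ ζ : ℝ) :
    |G t r ρ ζ| ^ 2 * ρ = (16 * π * t ^ 3)⁻¹ * exp (-(r ^ 2 + ζ ^ 2) / (2 * t))
      * (exp (-ρ ^ 2 / (2 * t)) * besselI1 (r * ρ / (2 * t)) ^ 2 * ρ) := by
  have hpow : (t ^ ((3 : ℝ) / 2)) ^ 2 = t ^ 3 := by
    rw [← Real.rpow_natCast, ← Real.rpow_mul ht.le]
    norm_num
  have hexp : exp (-(r ^ 2 + ρ ^ 2 + ζ ^ 2) / (4 * t)) ^ 2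
      = exp (-(r ^ 2 + ζ ^ 2) / (2 * t)) * exp (-ρ ^ 2 / (2 * t)) := by
    rw [sq, ← Real.exp_add, ← Real.exp_add]
    congr 1
    field_simp
    ring
  rw [sq_abs, G, mul_pow, mul_pow, inv_pow, mul_pow, mul_pow, Real.sq_sqrt Real.pi_pos.le, hpow,
    hexp]
  ring

lemma rpow_neg_three_halves {t : ℝ} (ht : 0 < t) : t ^ (-(3 : ℝ) / 2) = (t * √t)⁻¹ := by
  rw [show -(3 : ℝ) / 2 = -(1 + 1 / 2) by norm_num, Real.rpow_neg ht.le, Real.rpow_add ht,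
    Real.rpow_one, Real.sqrt_eq_rpow]

lemma integral_integral_sq_abs_G {t : ℝ} (ht : 0 < t) (r : ℝ) :
    ∫ ζ, ∫ ρ in Set.Ioi 0, |G t r ρ ζ| ^ 2 * ρ
      = √(2 * π) / (16 * π) * t ^ (-(3 : ℝ) / 2)
        * (exp (-(r ^ 2 / (4 * t))) * besselI1 (r ^ 2 / (4 * t))) := by
  set y := r ^ 2 / (4 * t)
  set K := (16 * π * t ^ 3)⁻¹ * exp (-r ^ 2 / (2 * t)) * (t * (exp y * besselI1 y))
  have hinner (ζ : ℝ) :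
      ∫ ρ in Set.Ioi 0, |G t r ρ ζ| ^ 2 * ρ = K * exp (-(2 * t)⁻¹ * ζ ^ 2) := by
    simp_rw [sq_abs_G_mul ht, integral_const_mul, integral_exp_mul_besselI1_sq ht]
    have hsplit : exp (-(r ^ 2 + ζ ^ 2) / (2 * t))
        = exp (-r ^ 2 / (2 * t)) * exp (-(2 * t)⁻¹ * ζ ^ 2) := by
      rw [← Real.exp_add]
      congr 1
      field_simp
      ring
    rw [hsplit]
    ring
  have hexp : exp (-r ^ 2 / (2 * t)) * exp y = exp (-y) := by
    rw [← Real.exp_add]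
    congr 1
    simp only [y]
    field_simp
    ring
  simp_rw [hinner, integral_const_mul, integral_gaussian, rpow_neg_three_halves ht]
  rw [div_inv_eq_mul, show π * (2 * t) = 2 * π * t by ring, Real.sqrt_mul (by positivity),
    ← hexp]
  have hsqrt : √t ≠ 0 := (Real.sqrt_pos.2 ht).ne'
  simp only [K]
  field_simp
  rw [Real.sq_sqrt ht.le, mul_comm]

theorem stmt14 :
    ∃ C : ℝ, 0 < C ∧ ∀ r t : ℝ, 0 < r → 0 < t →
      Real.sqrt (∫ ζ : ℝ, ∫ ρ in Set.Ioi (0 : ℝ), |G t r ρ ζ| ^ 2 * ρ)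
        ≤ C * t ^ (-(3 : ℝ) / 4) * Real.exp (-r ^ 2 / (8 * t)) *
          Real.sqrt (besselI1 (r ^ 2 / (4 * t))) := by
  refine ⟨√(√(2 * π) / (16 * π)), by positivity, fun r t _ ht => le_of_eq ?_⟩
  have hbessel := besselI1_nonneg (by positivity : 0 ≤ r ^ 2 / (4 * t))
  have hpow : (t ^ (-(3 : ℝ) / 4)) ^ 2 = t ^ (-(3 : ℝ) / 2) := by
    rw [← Real.rpow_natCast, ← Real.rpow_mul ht.le]
    norm_num
  have hexp : exp (-r ^ 2 / (8 * t)) ^ 2 = exp (-(r ^ 2 / (4 * t))) := by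
    rw [sq, ← Real.exp_add]
    ring_nf
  rw [integral_integral_sq_abs_G ht, Real.sqrt_eq_iff_eq_sq (by positivity) (by positivity),
    mul_pow, mul_pow, mul_pow, Real.sq_sqrt (by positivity), Real.sq_sqrt hbessel, hpow, hexp]
  ring
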